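/- Let n ≥ 1, let I, J ⊆ {1,…,n} be disjoint subsets with I nonempty, and let I₀ ⊆ I. Then in ℝⁿ the Minkowski sum of the convex hull of {e_i : i ∈ I} and the convex cone generated by {e_i : i ∈ J ∪ (I \ I₀)} equals P(I, I₀, J). -/
import Mathlib


open Pointwise

/-- The convex cone generated by a set `Ω ⊆ ℝⁿ`: all finite nonnegative real linear
combinations of elements of `Ω` (in particular it contains `0`). -/
def coneGen {n : ℕ} (Ω : Set (Fin n → ℝ)) : Set (Fin n → ℝ) :=
  { x | ∃ (k : ℕ) (c : Fin k → ℝ) (v : Fin k → (Fin n → ℝ)),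
      (∀ j, 0 ≤ c j) ∧ (∀ j, v j ∈ Ω) ∧ x = ∑ j, c j • v j }

/-- The semistability polytope `P(I, I₀, J)`: all `a ∈ ℝⁿ` with `a_i ≥ 0`, `a_i = 0` for
`i ∉ I ∪ J`, `∑_{i∈I} a_i ≥ 1` and `∑_{i∈I₀} a_i ≤ 1`. -/
def Pset {n : ℕ} (I I₀ J : Finset (Fin n)) : Set (Fin n → ℝ) :=
  { a | (∀ i, 0 ≤ a i) ∧ (∀ i, i ∉ I ∪ J → a i = 0) ∧
        1 ≤ ∑ i ∈ I, a i ∧ ∑ i ∈ I₀, a i ≤ 1 }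

lemma sum_single_apply {n : ℕ} (F : Finset (Fin n)) (w : Fin n → ℝ) (j : Fin n) :
    (∑ i ∈ F, w i • (Pi.single i (1 : ℝ) : Fin n → ℝ)) j = if j ∈ F then w j else 0 := by
  rw [Finset.sum_apply]
  simp [Pi.single_apply]

lemma mem_coneGen_iff {n : ℕ} (F : Finset (Fin n)) (w : Fin n → ℝ) :
    w ∈ coneGen ((fun i => Pi.single i (1 : ℝ)) '' (F : Set (Fin n))) ↔
      (∀ i, 0 ≤ w i) ∧ (∀ i, i ∉ F → w i = 0) := by
  constructor
  · rintro ⟨k, c, v, hc, hv, rfl⟩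
    have hv' : ∀ j, ∃ m : Fin n, m ∈ F ∧ Pi.single m (1 : ℝ) = v j := by
      intro j
      rcases hv j with ⟨m, hm, hmv⟩
      exact ⟨m, hm, hmv⟩
    choose m hmF hmv using hv'
    constructor
    · intro i
      rw [Finset.sum_apply]
      refine Finset.sum_nonneg fun j _ => ?_
      rw [← hmv j]
      simp only [Pi.smul_apply, Pi.single_apply, smul_eq_mul]
      split <;> simp [hc j]
    · intro i hi
      rw [Finset.sum_apply]
      refine Finset.sum_eq_zero fun j _ => ?_
      rw [← hmv j]
      simp only [Pi.smul_apply, Pi.single_apply, smul_eq_mul]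
      rw [if_neg, mul_zero]
      rintro rfl
      exact hi (hmF j)
  · rintro ⟨h0, hz⟩
    refine ⟨F.card, fun j => w (F.equivFin.symm j : Fin n),
      fun j => Pi.single ((F.equivFin.symm j : Fin n)) 1,
      fun j => h0 _, fun j => ⟨_, (F.equivFin.symm j).2, rfl⟩, ?_⟩
    have : ∑ j : Fin F.card, w (F.equivFin.symm j : Fin n) • (Pi.single
        ((F.equivFin.symm j : Fin n)) (1 : ℝ) : Fin n → ℝ)
        = ∑ i ∈ F, w i • (Pi.single i (1 : ℝ) : Fin n → ℝ) := by
      rw [← Finset.sum_coe_sort F (fun i => w i • (Pi.single i (1 : ℝ) : Fin n → ℝ))]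
      exact (Fintype.sum_equiv F.equivFin.symm _ _ fun j => rfl)
    rw [this]
    funext j
    rw [sum_single_apply]
    split
    · rfl
    · exact hz j (by assumption)

lemma convexHull_single_eq {n : ℕ} (I : Finset (Fin n)) :
    convexHull ℝ ((fun i => Pi.single i (1 : ℝ)) '' (I : Set (Fin n))) =
      {u | (∀ i, 0 ≤ u i) ∧ (∀ i, i ∉ I → u i = 0) ∧ ∑ i ∈ I, u i = 1} := by
  apply le_antisymm
  · apply convexHull_min
    · rintro _ ⟨i, hi, rfl⟩
      have hiI : i ∈ I := hi
      refine ⟨fun j => ?_, fun j hj => ?_, ?_⟩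
      · dsimp only
        rw [Pi.single_apply]; split <;> norm_num
      · dsimp only
        rw [Pi.single_apply, if_neg]; rintro rfl; exact hj hiI
      · dsimp only
        simp only [Pi.single_apply]
        rw [Finset.sum_ite_eq' I i (fun _ => (1 : ℝ)), if_pos hiI]
    · rintro x ⟨hx0, hxz, hxs⟩ y ⟨hy0, hyz, hys⟩ a b ha hb hab
      refine ⟨fun i => ?_, fun i hi => ?_, ?_⟩
      · exact add_nonneg (mul_nonneg ha (hx0 i)) (mul_nonneg hb (hy0 i))
      · simp [hxz i hi, hyz i hi]
      · simp only [Pi.add_apply, Pi.smul_apply, smul_eq_mul]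
        rw [Finset.sum_add_distrib, ← Finset.mul_sum, ← Finset.mul_sum, hxs, hys]
        linarith
  · rintro u ⟨h0, hz, hs⟩
    have hu : u = ∑ i ∈ I, u i • (Pi.single i (1 : ℝ) : Fin n → ℝ) := by
      funext j
      rw [sum_single_apply]
      split
      · rfl
      · exact hz j (by assumption)
    rw [hu, ← Finset.centerMass_eq_of_sum_1 I (fun i => (Pi.single i (1 : ℝ) : Fin n → ℝ)) hs]
    exact Finset.centerMass_mem_convexHull I (fun i _ => h0 i) (by rw [hs]; norm_num)
      (fun i hi => ⟨i, hi, rfl⟩)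

/-- The Minkowski sum of the convex hull of `{e_i : i ∈ I}` and the convex cone generated by
`{e_i : i ∈ J ∪ (I \ I₀)}` equals `P(I, I₀, J)`. -/
theorem minkowski_sum_eq_Pset (n : ℕ) (hn : 1 ≤ n) (I J : Finset (Fin n))
    (hIJ : Disjoint I J) (hI : I.Nonempty) (I₀ : Finset (Fin n)) (hI₀ : I₀ ⊆ I) :
    convexHull ℝ ((fun i => Pi.single i (1 : ℝ)) '' (I : Set (Fin n)))
      + coneGen ((fun i => Pi.single i (1 : ℝ)) '' ((J ∪ (I \ I₀) : Finset (Fin n)) : Set (Fin n)))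
    = Pset I I₀ J := by
  ext a
  rw [Set.mem_add]
  constructor
  · rintro ⟨u, hu, w, hw, rfl⟩
    rw [convexHull_single_eq] at hu
    rw [mem_coneGen_iff] at hw
    obtain ⟨hu0, huz, hus⟩ := hu
    obtain ⟨hw0, hwz⟩ := hw
    have hwI₀ : ∀ i ∈ I₀, w i = 0 := by
      intro i hi
      apply hwz
      simp only [Finset.mem_union, Finset.mem_sdiff, not_or]
      exact ⟨fun h => Finset.disjoint_left.mp hIJ (hI₀ hi) h, fun h => h.2 hi⟩
    refine ⟨fun i => add_nonneg (hu0 i) (hw0 i), fun i hi => ?_, ?_, ?_⟩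
    · simp only [Finset.mem_union, not_or] at hi
      have : w i = 0 := by
        apply hwz
        simp only [Finset.mem_union, Finset.mem_sdiff, not_or]
        exact ⟨hi.2, fun h => hi.1 h.1⟩
      simp [huz i hi.1, this]
    · simp only [Pi.add_apply]
      rw [Finset.sum_add_distrib, hus]
      have : 0 ≤ ∑ i ∈ I, w i := Finset.sum_nonneg fun i _ => hw0 i
      linarith
    · simp only [Pi.add_apply]
      rw [Finset.sum_add_distrib, Finset.sum_eq_zero hwI₀, add_zero]
      calc ∑ i ∈ I₀, u i ≤ ∑ i ∈ I, u i :=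
            Finset.sum_le_sum_of_subset_of_nonneg hI₀ fun i _ _ => hu0 i
        _ = 1 := hus
  · rintro ⟨h0, hz, h1ge, h0le⟩
    set S0 : ℝ := ∑ i ∈ I₀, a i with hS0
    set S' : ℝ := ∑ i ∈ I \ I₀, a i with hS'
    have hsplit : S' + S0 = ∑ i ∈ I, a i := Finset.sum_sdiff hI₀
    set t : ℝ := 1 - S0 with ht
    have ht0 : 0 ≤ t := by simp only [ht]; linarith
    have htS' : t ≤ S' := by simp only [ht]; linarith
    have hS'0 : 0 ≤ S' := Finset.sum_nonneg fun i _ => h0 i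
    set r : ℝ := if S' = 0 then 0 else t / S' with hr
    have hr0 : 0 ≤ r := by
      rw [hr]; split
      · exact le_refl 0
      · exact div_nonneg ht0 hS'0
    have hr1 : r ≤ 1 := by
      rw [hr]; split
      · norm_num
      · rename_i h
        exact div_le_one_of_le₀ htS' hS'0
    set u : Fin n → ℝ := fun i => if i ∈ I₀ then a i else if i ∈ I \ I₀ then r * a i else 0
      with hu
    have hu0 : ∀ i, 0 ≤ u i := by
      intro i
      rw [hu]
      dsimp only
      split
      · exact h0 i
      · split
        · exact mul_nonneg hr0 (h0 i)
        · exact le_refl 0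
    have huz : ∀ i, i ∉ I → u i = 0 := by
      intro i hi
      rw [hu]
      dsimp only
      rw [if_neg (fun h => hi (hI₀ h)), if_neg (fun h => hi (Finset.mem_sdiff.mp h).1)]
    have hule : ∀ i, u i ≤ a i := by
      intro i
      rw [hu]
      dsimp only
      split
      · exact le_refl _
      · split
        · calc r * a i ≤ 1 * a i := mul_le_mul_of_nonneg_right hr1 (h0 i)
            _ = a i := one_mul _
        · exact h0 i
    have hus : ∑ i ∈ I, u i = 1 := by
      rw [← Finset.sum_sdiff hI₀ (f := u)]
      have h1 : ∑ i ∈ I₀, u i = S0 := by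
        apply Finset.sum_congr rfl
        intro i hi
        rw [hu]; dsimp only; rw [if_pos hi]
      have h2 : ∑ i ∈ I \ I₀, u i = r * S' := by
        rw [Finset.mul_sum]
        apply Finset.sum_congr rfl
        intro i hi
        rw [hu]; dsimp only
        rw [if_neg (Finset.mem_sdiff.mp hi).2, if_pos hi]
      rw [h1, h2]
      by_cases hS'z : S' = 0
      · have : t = 0 := le_antisymm (hS'z ▸ htS') ht0
        have : S0 = 1 := by simp only [ht] at this; linarith
        rw [hS'z, this]; ring
      · rw [hr, if_neg hS'z, div_mul_cancel₀ _ hS'z]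
        simp only [ht]; ring
    refine ⟨u, ?_, a - u, ?_, by ring⟩
    · rw [convexHull_single_eq]
      exact ⟨hu0, huz, hus⟩
    · rw [mem_coneGen_iff]
      refine ⟨fun i => by simpa using sub_nonneg.mpr (hule i), fun i hi => ?_⟩
      simp only [Finset.mem_union, Finset.mem_sdiff, not_or, not_and, not_not] at hi
      simp only [Pi.sub_apply]
      by_cases hi₀ : i ∈ I₀
      · rw [hu]; dsimp only; rw [if_pos hi₀]; ring
      · have hiI : i ∉ I := fun h => hi₀ (hi.2 h)
        rw [huz i hiI, hz i (by simp [hiI, hi.1]), sub_zero]
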